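/- arXiv:1408.1533 — 3 statements merged into one kernel-verified Lean document; each statement's English description precedes it below -/
import Mathlib

section
/- Let k ≥ 2 be an integer. There is a constant C = C(k) > 0 such that for any real numbers K, y, z with 1 ≤ K ≤ N and 1 ≤ y < z, we have ∑_{N-K < n ≤ N} |b_{y,z}(n)|² ≤ C · (K y^{1-k} + N^{1/k} (log z)³), where the sum is over integers n. -/
/-! Since `|μ| ≤ 1`, `b(n)²` is at most the number of pairs `(d₁, d₂)` of integers in `[y, z)`
with `lcm(d₁, d₂)ᵏ ∣ n`. Summing over `n`, a pair with `m = lcm(d₁, d₂)ᵏ` contributes the number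
of multiples of `m` in `(N - K, N]`, which is `≤ 3K/m` if `m ≤ K` and `≤ 2` if `K < m ≤ N`.
Writing a pair as `(g a, g b)` with `g` its gcd, so that `lcm = g a b`, the first contribution is
`K ∑ lcm(d₁, d₂)⁻ᵏ ≪ K y¹⁻ᵏ`, and the second is at most the number of triples with `a, b < z` and
`g a b ≤ N^{1/k}`, which is `≪ N^{1/k} (log z)²`. The second contribution is empty unless `z > 2`,
and then `(1 + log z)² ≤ 10 (log z)³`. -/

noncomputable def e (x : ℝ) : ℂ := Complex.exp (2 * Real.pi * Complex.I * x)

open Classical in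
/-- `b k y z n = ∑_{d^k ∣ n, y ≤ d < z} μ(d)` for `n ≥ 1`, and `b k y z 0 = 0`. -/
noncomputable def b (k : ℕ) (y z : ℝ) (n : ℕ) : ℤ :=
  ∑ d ∈ (Finset.Icc 1 n).filter (fun d : ℕ => y ≤ (d : ℝ) ∧ (d : ℝ) < z ∧ d ^ k ∣ n),
    ArithmeticFunction.moebius d

open Finset

theorem Nat.gcd_mul_div_gcd_mul_div_gcd (a b : ℕ) :
    Nat.gcd a b * (a / Nat.gcd a b) * (b / Nat.gcd a b) = Nat.lcm a b := by
  rw [Nat.mul_div_cancel' (Nat.gcd_dvd_left a b), ← Nat.mul_div_assoc _ (Nat.gcd_dvd_right a b)]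
  rfl

def gcdSplit (p : ℕ × ℕ) : ℕ × ℕ × ℕ :=
  (Nat.gcd p.1 p.2, p.1 / Nat.gcd p.1 p.2, p.2 / Nat.gcd p.1 p.2)

theorem gcdSplit_injective : Function.Injective gcdSplit := by
  rintro ⟨a, b⟩ ⟨a', b'⟩ h
  simp only [gcdSplit, Prod.mk.injEq] at h
  obtain ⟨hg, ha, hb⟩ := h
  refine Prod.ext ?_ ?_
  · calc a = Nat.gcd a b * (a / Nat.gcd a b) := (Nat.mul_div_cancel' (Nat.gcd_dvd_left a b)).symm
      _ = Nat.gcd a' b' * (a' / Nat.gcd a' b') := congrArg₂ (· * ·) hg ha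
      _ = a' := Nat.mul_div_cancel' (Nat.gcd_dvd_left a' b')
  · calc b = Nat.gcd a b * (b / Nat.gcd a b) := (Nat.mul_div_cancel' (Nat.gcd_dvd_right a b)).symm
      _ = Nat.gcd a' b' * (b' / Nat.gcd a' b') := congrArg₂ (· * ·) hg hb
      _ = b' := Nat.mul_div_cancel' (Nat.gcd_dvd_right a' b')

theorem gcdSplit_mem_Icc {M : ℕ} {p : ℕ × ℕ} (h1 : p.1 ∈ Icc 1 M) (h2 : p.2 ∈ Icc 1 M) :
    gcdSplit p ∈ Icc 1 M ×ˢ Icc 1 M ×ˢ Icc 1 M := by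
  simp only [mem_Icc] at h1 h2
  have hg : 0 < Nat.gcd p.1 p.2 := Nat.gcd_pos_of_pos_left _ h1.1
  have hg1 : Nat.gcd p.1 p.2 ≤ p.1 := Nat.le_of_dvd h1.1 (Nat.gcd_dvd_left _ _)
  have hg2 : Nat.gcd p.1 p.2 ≤ p.2 := Nat.le_of_dvd h2.1 (Nat.gcd_dvd_right _ _)
  simp only [gcdSplit, mem_product, mem_Icc]
  exact ⟨⟨hg, by omega⟩, ⟨Nat.div_pos hg1 hg, (Nat.div_le_self _ _).trans h1.2⟩,
    ⟨Nat.div_pos hg2 hg, (Nat.div_le_self _ _).trans h2.2⟩⟩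

theorem sum_gcdSplit_le {S : Finset ℕ} {M : ℕ} (hS : S ⊆ Icc 1 M) {f : ℕ × ℕ × ℕ → ℝ}
    (hf : 0 ≤ f) :
    ∑ p ∈ S ×ˢ S, f (gcdSplit p) ≤ ∑ t ∈ Icc 1 M ×ˢ Icc 1 M ×ˢ Icc 1 M, f t := by
  rw [← sum_image gcdSplit_injective.injOn]
  refine sum_le_sum_of_subset_of_nonneg (fun t ht => ?_) fun t _ _ => hf t
  obtain ⟨p, hp, rfl⟩ := mem_image.mp ht
  rw [mem_product] at hp
  exact gcdSplit_mem_Icc (hS hp.1) (hS hp.2)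

theorem sum_inv_sq_filter_le (M : ℕ) (t : ℝ) :
    ∑ a ∈ (Icc 1 M).filter (fun a : ℕ => t ≤ a), ((a : ℝ) ^ 2)⁻¹ ≤ 2 / max t 1 := by
  set j := ⌈t⌉₊ - 1
  have hsub : (Icc 1 M).filter (fun a : ℕ => t ≤ a) ⊆ Ioo j (M + 1) := fun a ha => by
    simp only [mem_filter, mem_Icc] at ha
    have := Nat.ceil_le.mpr ha.2
    simp only [mem_Ioo]
    omega
  have hj : max t 1 ≤ (j : ℝ) + 1 := by
    have : ⌈t⌉₊ ≤ j + 1 := by omega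
    exact max_le ((Nat.le_ceil t).trans (by exact_mod_cast this)) (by simp)
  calc ∑ a ∈ (Icc 1 M).filter (fun a : ℕ => t ≤ a), ((a : ℝ) ^ 2)⁻¹
      ≤ ∑ a ∈ Ioo j (M + 1), ((a : ℝ) ^ 2)⁻¹ :=
        sum_le_sum_of_subset_of_nonneg hsub fun _ _ _ => by positivity
    _ ≤ 2 / ((j : ℝ) + 1) := sum_Ioo_inv_sq_le _ _
    _ ≤ 2 / max t 1 := by gcongr

theorem sum_inv_sq_max_le (M : ℕ) {y : ℝ} (hy : 1 ≤ y) :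
    ∑ g ∈ Icc 1 M, ((max y g : ℝ) ^ 2)⁻¹ ≤ 3 / y := by
  have hy0 : 0 < y := by linarith
  set L := (Icc 1 M).filter (fun g : ℕ => (g : ℝ) ≤ y)
  have hL : (#L : ℝ) ≤ y := by
    have : L ⊆ Icc 1 ⌊y⌋₊ := fun g hg => by
      simp only [L, mem_filter, mem_Icc] at hg ⊢
      exact ⟨hg.1.1, Nat.le_floor hg.2⟩
    calc (#L : ℝ) ≤ #(Icc 1 ⌊y⌋₊) := by exact_mod_cast card_le_card this
      _ ≤ y := by simpa using Nat.floor_le hy0.le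
  have hsmall : ∑ g ∈ L, ((max y g : ℝ) ^ 2)⁻¹ ≤ 1 / y :=
    calc ∑ g ∈ L, ((max y g : ℝ) ^ 2)⁻¹ = #L * (y ^ 2)⁻¹ := by
          rw [sum_congr rfl fun g hg => by rw [max_eq_left (mem_filter.mp hg).2], sum_const,
            nsmul_eq_mul]
      _ ≤ y * (y ^ 2)⁻¹ := by gcongr
      _ = 1 / y := by field_simp
  have hlarge : ∑ g ∈ (Icc 1 M).filter (fun g : ℕ => ¬ (g : ℝ) ≤ y), ((max y g : ℝ) ^ 2)⁻¹
      ≤ 2 / y :=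
    calc ∑ g ∈ (Icc 1 M).filter (fun g : ℕ => ¬ (g : ℝ) ≤ y), ((max y g : ℝ) ^ 2)⁻¹
        = ∑ g ∈ (Icc 1 M).filter (fun g : ℕ => ¬ (g : ℝ) ≤ y), ((g : ℝ) ^ 2)⁻¹ :=
          sum_congr rfl fun g hg => by rw [max_eq_right (not_le.mp (mem_filter.mp hg).2).le]
      _ ≤ ∑ g ∈ (Icc 1 M).filter (fun g : ℕ => y ≤ g), ((g : ℝ) ^ 2)⁻¹ :=
          sum_le_sum_of_subset_of_nonneg
            (monotone_filter_right _ fun _ _ hg => (not_le.mp hg).le) fun _ _ _ => by positivity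
      _ ≤ 2 / max y 1 := sum_inv_sq_filter_le M y
      _ = 2 / y := by rw [max_eq_left hy]
  calc ∑ g ∈ Icc 1 M, ((max y g : ℝ) ^ 2)⁻¹
      = ∑ g ∈ L, ((max y g : ℝ) ^ 2)⁻¹ +
          ∑ g ∈ (Icc 1 M).filter (fun g : ℕ => ¬ (g : ℝ) ≤ y), ((max y g : ℝ) ^ 2)⁻¹ :=
        (sum_filter_add_sum_filter_not _ _ _).symm
    _ ≤ 1 / y + 2 / y := add_le_add hsmall hlarge
    _ = 3 / y := by ring

theorem sum_inv_lcm_sq_le {S : Finset ℕ} {M : ℕ} (hS : S ⊆ Icc 1 M) {y : ℝ} (hy : 1 ≤ y)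
    (hyS : ∀ a ∈ S, y ≤ a) :
    ∑ p ∈ S ×ˢ S, ((Nat.lcm p.1 p.2 : ℝ) ^ 2)⁻¹ ≤ 12 / y := by
  set φ : ℕ → ℕ → ℝ := fun g a => if y ≤ (g : ℝ) * a then ((a : ℝ) ^ 2)⁻¹ else 0
  have hφ : ∀ g a, 0 ≤ φ g a := fun g a => by simp only [φ]; split <;> positivity
  set F : ℕ × ℕ × ℕ → ℝ := fun t => ((t.1 : ℝ) ^ 2)⁻¹ * (φ t.1 t.2.1 * φ t.1 t.2.2)
  have hsplit : ∀ p ∈ S ×ˢ S, ((Nat.lcm p.1 p.2 : ℝ) ^ 2)⁻¹ = F (gcdSplit p) := by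
    intro p hp
    rw [mem_product] at hp
    have hmul : ∀ a, Nat.gcd p.1 p.2 ∣ a →
        ((Nat.gcd p.1 p.2 * (a / Nat.gcd p.1 p.2) : ℕ) : ℝ) = a :=
      fun a ha => by rw [Nat.mul_div_cancel' ha]
    have h1 := hmul _ (Nat.gcd_dvd_left p.1 p.2)
    have h2 := hmul _ (Nat.gcd_dvd_right p.1 p.2)
    push_cast at h1 h2
    simp only [F, gcdSplit, φ, h1, h2, hyS _ hp.1, hyS _ hp.2, if_true]
    rw [← Nat.gcd_mul_div_gcd_mul_div_gcd]
    push_cast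
    rw [mul_pow, mul_pow, mul_inv, mul_inv, mul_assoc]
  have hinner : ∀ g ∈ Icc 1 M, ∑ a ∈ Icc 1 M, φ g a ≤ 2 * g / max y g := by
    intro g hg
    have hg0 : (0 : ℝ) < g := by exact_mod_cast (mem_Icc.mp hg).1
    calc ∑ a ∈ Icc 1 M, φ g a
        = ∑ a ∈ (Icc 1 M).filter (fun a : ℕ => y / g ≤ a), ((a : ℝ) ^ 2)⁻¹ := by
          rw [sum_filter]
          exact sum_congr rfl fun a _ => by simp only [φ, div_le_iff₀ hg0, mul_comm]
      _ ≤ 2 / max (y / g) 1 := sum_inv_sq_filter_le M _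
      _ = 2 * g / max y g := by
          rw [← mul_div_mul_left 2 _ hg0.ne', mul_max_of_nonneg _ _ hg0.le,
            mul_div_cancel₀ _ hg0.ne', mul_one, mul_comm]
  calc ∑ p ∈ S ×ˢ S, ((Nat.lcm p.1 p.2 : ℝ) ^ 2)⁻¹
      = ∑ p ∈ S ×ˢ S, F (gcdSplit p) := sum_congr rfl hsplit
    _ ≤ ∑ t ∈ Icc 1 M ×ˢ Icc 1 M ×ˢ Icc 1 M, F t :=
        sum_gcdSplit_le hS fun t => mul_nonneg (by positivity) (mul_nonneg (hφ _ _) (hφ _ _))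
    _ = ∑ g ∈ Icc 1 M, ((g : ℝ) ^ 2)⁻¹ * (∑ a ∈ Icc 1 M, φ g a) ^ 2 := by
        simp only [F, sum_product, ← mul_sum, sq, sum_mul_sum]
    _ ≤ ∑ g ∈ Icc 1 M, ((g : ℝ) ^ 2)⁻¹ * (2 * g / max y g) ^ 2 := by
        gcongr with g hg
        exact hinner g hg
    _ = 4 * ∑ g ∈ Icc 1 M, ((max y g : ℝ) ^ 2)⁻¹ := by
        rw [mul_sum]
        refine sum_congr rfl fun g hg => ?_
        have hg0 : (0 : ℝ) < g := by exact_mod_cast (mem_Icc.mp hg).1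
        field_simp
        ring
    _ ≤ 4 * (3 / y) := by gcongr; exact sum_inv_sq_max_le M hy
    _ = 12 / y := by ring

theorem sum_inv_lcm_pow_le {S : Finset ℕ} {M : ℕ} (hS : S ⊆ Icc 1 M) {y : ℝ} (hy : 1 ≤ y)
    (hyS : ∀ a ∈ S, y ≤ a) {k : ℕ} (hk : 2 ≤ k) :
    ∑ p ∈ S ×ˢ S, ((Nat.lcm p.1 p.2 : ℝ) ^ k)⁻¹ ≤ 12 * y ^ ((1 : ℝ) - k) := by
  have hy0 : 0 < y := by linarith
  obtain ⟨j, rfl⟩ : ∃ j, k = j + 2 := ⟨k - 2, by omega⟩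
  have hterm : ∀ p ∈ S ×ˢ S, ((Nat.lcm p.1 p.2 : ℝ) ^ (j + 2))⁻¹ ≤
      (y ^ j)⁻¹ * ((Nat.lcm p.1 p.2 : ℝ) ^ 2)⁻¹ := by
    intro p hp
    rw [mem_product] at hp
    have hpos : 0 < p.1 := (mem_Icc.mp (hS hp.1)).1
    have hlcm : y ≤ (Nat.lcm p.1 p.2 : ℝ) := (hyS _ hp.1).trans <| by
      exact_mod_cast Nat.le_of_dvd (Nat.lcm_pos hpos (mem_Icc.mp (hS hp.2)).1)
        (Nat.dvd_lcm_left _ _)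
    have hlcm0 : (0 : ℝ) < Nat.lcm p.1 p.2 := hy0.trans_le hlcm
    rw [← mul_inv, pow_add]
    gcongr
  calc ∑ p ∈ S ×ˢ S, ((Nat.lcm p.1 p.2 : ℝ) ^ (j + 2))⁻¹
      ≤ (y ^ j)⁻¹ * ∑ p ∈ S ×ˢ S, ((Nat.lcm p.1 p.2 : ℝ) ^ 2)⁻¹ := by
        rw [mul_sum]; exact sum_le_sum hterm
    _ ≤ (y ^ j)⁻¹ * (12 / y) := by gcongr; exact sum_inv_lcm_sq_le hS hy hyS
    _ = 12 * y ^ ((1 : ℝ) - (j + 2 : ℕ)) := by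
        rw [Real.rpow_sub hy0, Real.rpow_one, Real.rpow_natCast, pow_add]
        field_simp

theorem sum_inv_filter_lt_le (M : ℕ) {z : ℝ} (hz : 1 ≤ z) :
    ∑ a ∈ (Icc 1 M).filter (fun a : ℕ => (a : ℝ) < z), (a : ℝ)⁻¹ ≤ 1 + Real.log z := by
  have hsub : (Icc 1 M).filter (fun a : ℕ => (a : ℝ) < z) ⊆ Icc 1 ⌊z⌋₊ := fun a ha => by
    simp only [mem_filter, mem_Icc] at ha ⊢
    exact ⟨ha.1.1, Nat.le_floor ha.2.le⟩
  calc ∑ a ∈ (Icc 1 M).filter (fun a : ℕ => (a : ℝ) < z), (a : ℝ)⁻¹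
      ≤ ∑ a ∈ Icc 1 ⌊z⌋₊, (a : ℝ)⁻¹ :=
        sum_le_sum_of_subset_of_nonneg hsub fun _ _ _ => by positivity
    _ = harmonic ⌊z⌋₊ := by simp [harmonic_eq_sum_Icc]
    _ ≤ 1 + Real.log z := harmonic_floor_le_one_add_log z hz

theorem card_filter_mul_le (M : ℕ) {c X : ℝ} (hc : 0 < c) (hX : 0 ≤ X) :
    (#((Icc 1 M).filter (fun g : ℕ => g * c ≤ X)) : ℝ) ≤ X / c := by
  have hsub : (Icc 1 M).filter (fun g : ℕ => g * c ≤ X) ⊆ Icc 1 ⌊X / c⌋₊ := fun g hg => by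
    simp only [mem_filter, mem_Icc] at hg ⊢
    exact ⟨hg.1.1, Nat.le_floor ((le_div_iff₀ hc).mpr hg.2)⟩
  calc (#((Icc 1 M).filter (fun g : ℕ => g * c ≤ X)) : ℝ) ≤ #(Icc 1 ⌊X / c⌋₊) := by
        exact_mod_cast card_le_card hsub
    _ ≤ X / c := by simpa using Nat.floor_le (div_nonneg hX hc.le)

theorem card_filter_lcm_le {S : Finset ℕ} {M : ℕ} (hS : S ⊆ Icc 1 M) {z : ℝ} (hz : 1 ≤ z)
    (hSz : ∀ a ∈ S, (a : ℝ) < z) {X : ℝ} (hX : 0 ≤ X) :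
    (#((S ×ˢ S).filter (fun p : ℕ × ℕ => (Nat.lcm p.1 p.2 : ℝ) ≤ X)) : ℝ)
      ≤ X * (1 + Real.log z) ^ 2 := by
  set ψ : ℕ → ℝ := fun a => if (a : ℝ) < z then (a : ℝ)⁻¹ else 0
  have hψ : ∀ a, 0 ≤ ψ a := fun a => by simp only [ψ]; split <;> positivity
  set F : ℕ × ℕ × ℕ → ℝ := fun t =>
    if (t.2.1 : ℝ) < z ∧ (t.2.2 : ℝ) < z ∧ (t.1 : ℝ) * (t.2.1 * t.2.2) ≤ X then 1 else 0
  have hsplit : ∀ p ∈ S ×ˢ S,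
      (if (Nat.lcm p.1 p.2 : ℝ) ≤ X then (1 : ℝ) else 0) ≤ F (gcdSplit p) := by
    intro p hp
    rw [mem_product] at hp
    have hlt : ∀ a ∈ S, ((a / Nat.gcd p.1 p.2 : ℕ) : ℝ) < z := fun a ha =>
      (Nat.cast_le.mpr (Nat.div_le_self _ _)).trans_lt (hSz a ha)
    have hlcm := congrArg (fun n : ℕ => (n : ℝ)) (Nat.gcd_mul_div_gcd_mul_div_gcd p.1 p.2)
    push_cast at hlcm
    simp only [F, gcdSplit, hlt _ hp.1, hlt _ hp.2, true_and, ← mul_assoc, hlcm]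
    split <;> simp
  have hinner : ∀ v ∈ Icc 1 M ×ˢ Icc 1 M, ∑ g ∈ Icc 1 M, F (g, v) ≤ X * (ψ v.1 * ψ v.2) := by
    rintro ⟨a, b⟩ hv
    simp only [mem_product, mem_Icc] at hv
    have hab : (0 : ℝ) < a * b := by
      have : (1 : ℝ) ≤ a := by exact_mod_cast hv.1.1
      have : (1 : ℝ) ≤ b := by exact_mod_cast hv.2.1
      positivity
    by_cases h : (a : ℝ) < z ∧ (b : ℝ) < z
    · simp only [F, ψ, h, true_and, if_true, sum_boole]
      calc (#((Icc 1 M).filter (fun g : ℕ => g * ((a : ℝ) * b) ≤ X)) : ℝ) ≤ X / (a * b) :=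
            card_filter_mul_le M hab hX
        _ = X * ((a : ℝ)⁻¹ * (b : ℝ)⁻¹) := by rw [div_eq_mul_inv, mul_inv]
    · have hF : ∀ g, F (g, a, b) = 0 := fun g => if_neg fun h' => h ⟨h'.1, h'.2.1⟩
      simp only [hF, sum_const_zero]
      exact mul_nonneg hX (mul_nonneg (hψ a) (hψ b))
  calc (#((S ×ˢ S).filter (fun p : ℕ × ℕ => (Nat.lcm p.1 p.2 : ℝ) ≤ X)) : ℝ)
      = ∑ p ∈ S ×ˢ S, if (Nat.lcm p.1 p.2 : ℝ) ≤ X then (1 : ℝ) else 0 := by rw [sum_boole]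
    _ ≤ ∑ p ∈ S ×ˢ S, F (gcdSplit p) := sum_le_sum hsplit
    _ ≤ ∑ t ∈ Icc 1 M ×ˢ Icc 1 M ×ˢ Icc 1 M, F t :=
        sum_gcdSplit_le hS fun t => by simp only [F]; split <;> positivity
    _ = ∑ v ∈ Icc 1 M ×ˢ Icc 1 M, ∑ g ∈ Icc 1 M, F (g, v) := sum_product_right _ _ _
    _ ≤ ∑ v ∈ Icc 1 M ×ˢ Icc 1 M, X * (ψ v.1 * ψ v.2) := sum_le_sum hinner
    _ = X * (∑ a ∈ (Icc 1 M).filter (fun a : ℕ => (a : ℝ) < z), (a : ℝ)⁻¹) ^ 2 := by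
        rw [← mul_sum, sum_product, ← sum_mul_sum, ← sq, sum_filter]
    _ ≤ X * (1 + Real.log z) ^ 2 := by
        gcongr
        exact sum_inv_filter_lt_le M hz

theorem one_add_log_sq_le {z : ℝ} (hz : 2 ≤ z) : (1 + Real.log z) ^ 2 ≤ 10 * Real.log z ^ 3 := by
  have h2 : (0.6931471803 : ℝ) < Real.log z :=
    Real.log_two_gt_d9.trans_le (Real.log_le_log (by norm_num) hz)
  nlinarith [sq_nonneg (Real.log z - 1), mul_pos (by linarith : (0 : ℝ) < Real.log z)
    (by linarith : (0 : ℝ) < Real.log z)]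

theorem card_filter_lcm_pow_le {S : Finset ℕ} {M : ℕ} (hS : S ⊆ Icc 1 M) {z : ℝ} (hz : 1 ≤ z)
    (hSz : ∀ a ∈ S, (a : ℝ) < z) {K : ℝ} (hK : 1 ≤ K) (N : ℕ) {k : ℕ} (hk : k ≠ 0) :
    (#((S ×ˢ S).filter (fun p : ℕ × ℕ =>
        K < (Nat.lcm p.1 p.2 : ℝ) ^ k ∧ Nat.lcm p.1 p.2 ^ k ≤ N)) : ℝ)
      ≤ 10 * ((N : ℝ) ^ (1 / (k : ℝ)) * Real.log z ^ 3) := by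
  have hX : 0 ≤ (N : ℝ) ^ (1 / (k : ℝ)) := by positivity
  rcases lt_or_ge z 2 with hz2 | hz2
  · have hS1 : ∀ a ∈ S, a = 1 := fun a ha => by
      have h1 := (mem_Icc.mp (hS ha)).1
      have h2 : a < 2 := by exact_mod_cast (hSz a ha).trans hz2
      omega
    rw [filter_false_of_mem]
    · have := Real.log_nonneg hz
      simp only [card_empty, Nat.cast_zero]
      positivity
    · rintro ⟨a, b⟩ hp ⟨hKl, -⟩
      rw [mem_product] at hp
      rw [hS1 a hp.1, hS1 b hp.2] at hKl
      norm_num at hKl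
      linarith
  calc (#((S ×ˢ S).filter (fun p : ℕ × ℕ =>
        K < (Nat.lcm p.1 p.2 : ℝ) ^ k ∧ Nat.lcm p.1 p.2 ^ k ≤ N)) : ℝ)
      ≤ #((S ×ˢ S).filter (fun p : ℕ × ℕ =>
          (Nat.lcm p.1 p.2 : ℝ) ≤ (N : ℝ) ^ (1 / (k : ℝ)))) := by
        refine Nat.cast_le.mpr (card_le_card (monotone_filter_right _ fun p _ hp => ?_))
        rw [one_div, Real.le_rpow_inv_iff_of_pos (by positivity) (by positivity)
          (by positivity), Real.rpow_natCast]
        exact_mod_cast hp.2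
    _ ≤ (N : ℝ) ^ (1 / (k : ℝ)) * (1 + Real.log z) ^ 2 := card_filter_lcm_le hS hz hSz hX
    _ ≤ (N : ℝ) ^ (1 / (k : ℝ)) * (10 * Real.log z ^ 3) := by
        gcongr; exact one_add_log_sq_le hz2
    _ = 10 * ((N : ℝ) ^ (1 / (k : ℝ)) * Real.log z ^ 3) := by ring

theorem card_filter_dvd_Ioc_le (a b m : ℕ) :
    #((Ioc a b).filter (m ∣ ·)) ≤ (b - a) / m + 1 := by
  rcases le_total b a with hba | hab
  · simp [Ioc_eq_empty_of_le hba]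
  have hsplit : #((Ioc 0 b).filter (m ∣ ·)) =
      #((Ioc 0 a).filter (m ∣ ·)) + #((Ioc a b).filter (m ∣ ·)) := by
    rw [← Ioc_union_Ioc_eq_Ioc (Nat.zero_le a) hab, filter_union,
      card_union_of_disjoint (disjoint_filter_filter (Ioc_disjoint_Ioc_of_le le_rfl))]
  rw [Nat.Ioc_filter_dvd_card_eq_div, Nat.Ioc_filter_dvd_card_eq_div] at hsplit
  have := Nat.add_div_le_div_add_div_add_one a (b - a) m
  rw [Nat.add_sub_cancel' hab] at this
  omega

noncomputable def shortInterval (N : ℕ) (K : ℝ) : Finset ℕ :=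
  (Icc 1 N).filter (fun n : ℕ => (N : ℝ) - K < n)

theorem card_filter_dvd_shortInterval_le (N m : ℕ) (K : ℝ) :
    #((shortInterval N K).filter (m ∣ ·)) ≤ ⌈K⌉₊ / m + 1 := by
  refine (card_le_card fun n hn => ?_).trans
    ((card_filter_dvd_Ioc_le (N - ⌈K⌉₊) N m).trans (by gcongr; omega))
  simp only [shortInterval, mem_filter, mem_Icc, mem_Ioc] at hn ⊢
  obtain ⟨⟨⟨hn1, hnN⟩, hK⟩, hm⟩ := hn
  have : N < n + ⌈K⌉₊ := by
    have := Nat.le_ceil K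
    exact_mod_cast (show (N : ℝ) < n + ⌈K⌉₊ by linarith)
  exact ⟨⟨by omega, hnN⟩, hm⟩

theorem card_filter_dvd_shortInterval_le_three_mul {N m : ℕ} (hm : 1 ≤ m) {K : ℝ}
    (hK : 1 ≤ K) :
    (#((shortInterval N K).filter (m ∣ ·)) : ℝ) ≤ 3 * K / m + if K < m ∧ m ≤ N then 2 else 0 := by
  have hm0 : (0 : ℝ) < m := by exact_mod_cast hm
  have hcount := card_filter_dvd_shortInterval_le N m K
  rcases lt_or_ge N m with hNm | hmN
  · rw [filter_false_of_mem fun n hn hdvd => ?_]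
    · simp only [card_empty, Nat.cast_zero]
      positivity
    · simp only [shortInterval, mem_filter, mem_Icc] at hn
      exact absurd (Nat.le_of_dvd hn.1.1 hdvd) (by omega)
  rcases lt_or_ge K m with hKm | hmK
  · have : ⌈K⌉₊ / m ≤ 1 := by
      rw [Nat.div_le_iff_le_mul_add_pred hm]
      have := Nat.ceil_le.mpr hKm.le
      omega
    have : (#((shortInterval N K).filter (m ∣ ·)) : ℝ) ≤ 2 := by
      exact_mod_cast hcount.trans (by omega)
    rw [if_pos ⟨hKm, hmN⟩]
    have : 0 ≤ 3 * K / m := by positivity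
    linarith
  rw [if_neg fun h => (not_lt.mpr hmK) h.1, add_zero]
  calc (#((shortInterval N K).filter (m ∣ ·)) : ℝ)
      ≤ ((⌈K⌉₊ / m : ℕ) : ℝ) + 1 := by exact_mod_cast hcount
    _ ≤ (K + 1) / m + K / m := by
        gcongr
        · exact Nat.cast_div_le.trans (by gcongr; exact (Nat.ceil_lt_add_one (by linarith)).le)
        · rwa [le_div_iff₀ hm0, one_mul]
    _ ≤ 3 * K / m := by rw [← add_div]; gcongr; linarith

noncomputable def divisorRange (N : ℕ) (y z : ℝ) : Finset ℕ :=
  (Icc 1 N).filter (fun d : ℕ => y ≤ d ∧ (d : ℝ) < z)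

theorem b_eq_sum_filter_dvd {k : ℕ} (hk : k ≠ 0) (y z : ℝ) {N n : ℕ} (hn : n ∈ Icc 1 N) :
    b k y z n = ∑ d ∈ (divisorRange N y z).filter (· ^ k ∣ n), ArithmeticFunction.moebius d := by
  rw [mem_Icc] at hn
  refine sum_congr (ext fun d => ?_) fun _ _ => rfl
  simp only [divisorRange, mem_filter, mem_Icc]
  constructor
  · rintro ⟨⟨hd1, hdn⟩, hy, hz, hdvd⟩
    exact ⟨⟨⟨hd1, hdn.trans hn.2⟩, hy, hz⟩, hdvd⟩
  · rintro ⟨⟨⟨hd1, -⟩, hy, hz⟩, hdvd⟩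
    exact ⟨⟨hd1, (Nat.le_self_pow hk d).trans (Nat.le_of_dvd hn.1 hdvd)⟩, hy, hz, hdvd⟩

theorem b_sq_le_sum_lcm_dvd {k : ℕ} (hk : k ≠ 0) (y z : ℝ) {N n : ℕ} (hn : n ∈ Icc 1 N) :
    (b k y z n : ℝ) ^ 2 ≤ ∑ p ∈ divisorRange N y z ×ˢ divisorRange N y z,
      if Nat.lcm p.1 p.2 ^ k ∣ n then (1 : ℝ) else 0 := by
  set D := (divisorRange N y z).filter (· ^ k ∣ n)
  have habs : |(b k y z n : ℝ)| ≤ #D := by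
    rw [b_eq_sum_filter_dvd hk y z hn, Int.cast_sum]
    refine (abs_sum_le_sum_abs _ _).trans ?_
    rw [card_eq_sum_ones, Nat.cast_sum, Nat.cast_one]
    exact sum_le_sum fun d _ => by exact_mod_cast ArithmeticFunction.abs_moebius_le_one
  have hpairs : (divisorRange N y z ×ˢ divisorRange N y z).filter
      (fun p : ℕ × ℕ => Nat.lcm p.1 p.2 ^ k ∣ n) = D ×ˢ D := by
    simp only [D, ← filter_product, ← Nat.pow_lcm_pow, Nat.lcm_dvd_iff]
  calc (b k y z n : ℝ) ^ 2 = |(b k y z n : ℝ)| ^ 2 := (sq_abs _).symm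
    _ ≤ (#D : ℝ) ^ 2 := by gcongr
    _ = _ := by rw [sum_boole, hpairs, card_product, Nat.cast_mul, sq]

theorem sum_b_sq_le_sum_card {k : ℕ} (hk : k ≠ 0) (y z : ℝ) {N : ℕ} {A : Finset ℕ}
    (hA : A ⊆ Icc 1 N) :
    ∑ n ∈ A, (b k y z n : ℝ) ^ 2 ≤ ∑ p ∈ divisorRange N y z ×ˢ divisorRange N y z,
      (#(A.filter (Nat.lcm p.1 p.2 ^ k ∣ ·)) : ℝ) := by
  refine (sum_le_sum fun n hn => b_sq_le_sum_lcm_dvd hk y z (hA hn)).trans_eq ?_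
  rw [sum_comm]
  simp only [sum_boole]

open Classical in
theorem b_short_interval_L2 (k : ℕ) (hk : 2 ≤ k) :
    ∃ C : ℝ, 0 < C ∧ ∀ N : ℕ, 0 < N → ∀ K y z : ℝ,
      1 ≤ K → K ≤ (N : ℝ) → 1 ≤ y → y < z →
      (∑ n ∈ (Finset.Icc 1 N).filter (fun n : ℕ => (N : ℝ) - K < (n : ℝ)),
          ((b k y z n : ℝ)) ^ 2)
        ≤ C * (K * y ^ ((1 : ℝ) - (k : ℝ)) +
            (N : ℝ) ^ (1 / (k : ℝ)) * (Real.log z) ^ 3) := by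
  refine ⟨36, by norm_num, fun N _ K y z hK _ hy hyz => ?_⟩
  set E := divisorRange N y z
  have hE : E ⊆ Icc 1 N := filter_subset _ _
  have hlcm : ∀ p ∈ E ×ˢ E, 1 ≤ Nat.lcm p.1 p.2 ^ k := fun p hp => by
    rw [mem_product] at hp
    exact Nat.one_le_pow _ _ (Nat.lcm_pos (mem_Icc.mp (hE hp.1)).1 (mem_Icc.mp (hE hp.2)).1)
  have hXL : 0 ≤ (N : ℝ) ^ (1 / (k : ℝ)) * Real.log z ^ 3 := by
    have := Real.log_nonneg (hy.trans hyz.le)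
    positivity
  calc _ ≤ ∑ p ∈ E ×ˢ E, (#((shortInterval N K).filter (Nat.lcm p.1 p.2 ^ k ∣ ·)) : ℝ) :=
        sum_b_sq_le_sum_card (by omega) y z (filter_subset _ _)
    _ ≤ ∑ p ∈ E ×ˢ E, (3 * K / (Nat.lcm p.1 p.2 ^ k : ℕ) +
          if K < (Nat.lcm p.1 p.2 ^ k : ℕ) ∧ Nat.lcm p.1 p.2 ^ k ≤ N then 2 else 0) :=
        sum_le_sum fun p hp => card_filter_dvd_shortInterval_le_three_mul (hlcm p hp) hK
    _ = 3 * K * ∑ p ∈ E ×ˢ E, ((Nat.lcm p.1 p.2 : ℝ) ^ k)⁻¹ +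
          2 * #((E ×ˢ E).filter (fun p : ℕ × ℕ =>
            K < (Nat.lcm p.1 p.2 : ℝ) ^ k ∧ Nat.lcm p.1 p.2 ^ k ≤ N)) := by
        push_cast
        rw [sum_add_distrib, mul_sum, ← sum_filter, sum_const, nsmul_eq_mul, mul_comm 2]
        simp only [div_eq_mul_inv]
    _ ≤ 3 * K * (12 * y ^ ((1 : ℝ) - k)) +
          2 * (10 * ((N : ℝ) ^ (1 / (k : ℝ)) * Real.log z ^ 3)) := by
        gcongr
        · exact sum_inv_lcm_pow_le hE hy (fun a ha => (mem_filter.mp ha).2.1) hk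
        · exact card_filter_lcm_pow_le hE (hy.trans hyz.le) (fun a ha => (mem_filter.mp ha).2.2)
            hK N (by omega)
    _ ≤ 36 * (K * y ^ ((1 : ℝ) - k) + (N : ℝ) ^ (1 / (k : ℝ)) * Real.log z ^ 3) := by
        linarith
end

section
/- Let k ≥ 2 be an integer. There is a constant C = C(k) > 0 such that for any real numbers y, z with 1 ≤ y < z and any integer N ≥ 1, we have ∑_{n ≤ N} |b_{y,z}(n)|² ≤ C · N y^{1-k}. -/
/-!
Since `|μ| ≤ 1`, `|b(n)|` is at most the number of `d ≥ y` with `d^k ∣ n`. Squaring and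
summing over `n ≤ N` counts pairs `(d₁, d₂)` with `lcm(d₁, d₂)^k ∣ n`, so the sum is at most
`N ∑_{d₁, d₂ ≥ y} lcm(d₁, d₂)^{-k}`. Writing `lcm^{-k} = gcd^k (d₁ d₂)^{-k}` and bounding the
single term `g = gcd(d₁, d₂)` by the sum over all common divisors `g` turns this into
`N ∑_g g^k A(g)²` with `A(g) = ∑_{d ≥ y, g ∣ d} d^{-k} ≤ 2 g^{-k} max(1, y/g)^{1-k}`.
The terms are then `≤ 4 y^{-k}` for the at most `y` values `g ≤ y`, and `≤ 4 g^{-k}` for `g > y`,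
which sum to `O(y^{1-k})`.
-/

open Finset

lemma abs_b_le_card_filter_pow_dvd {k n : ℕ} {y z : ℝ} {D : Finset ℕ}
    (hD : ∀ d, 1 ≤ d → d ≤ n → y ≤ d → d ∈ D) :
    |b k y z n| ≤ #{d ∈ D | d ^ k ∣ n} := by
  classical
  refine (abs_sum_le_sum_abs _ _).trans <|
    (sum_le_card_nsmul _ _ 1 fun d _ => ArithmeticFunction.abs_moebius_le_one).trans ?_
  rw [nsmul_one, Nat.cast_le]
  refine card_le_card fun d hd => ?_
  simp only [mem_filter, mem_Icc] at hd ⊢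
  exact ⟨hD d hd.1.1 hd.1.2 hd.2.1, hd.2.2.2⟩

lemma sum_sq_card_filter {α β : Type*} (S : Finset α) (D : Finset β)
    (r : β → α → Prop) [DecidableRel r] :
    ∑ n ∈ S, #{d ∈ D | r d n} ^ 2 = ∑ d₁ ∈ D, ∑ d₂ ∈ D, #{n ∈ S | r d₁ n ∧ r d₂ n} := by
  have hsq : ∀ n, #{d ∈ D | r d n} ^ 2 = #{p ∈ D ×ˢ D | r p.1 n ∧ r p.2 n} := fun n => by
    rw [sq, ← card_product, ← filter_product]
  simp_rw [hsq, ← sum_product' (f := fun d₁ d₂ => #{n ∈ S | r d₁ n ∧ r d₂ n})]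
  exact sum_card_bipartiteAbove_eq_sum_card_bipartiteBelow
    (fun n (p : β × β) => r p.1 n ∧ r p.2 n)

lemma card_filter_dvd_and_dvd_le (N a b : ℕ) :
    (#{n ∈ Icc 1 N | a ∣ n ∧ b ∣ n} : ℝ) ≤ N / Nat.lcm a b := by
  have : {n ∈ Icc 1 N | a ∣ n ∧ b ∣ n} = {n ∈ Ioc 0 N | Nat.lcm a b ∣ n} := by
    simp_rw [Nat.lcm_dvd_iff]; rfl
  rw [this, Nat.Ioc_filter_dvd_card_eq_div]
  exact Nat.cast_div_le

lemma sum_inv_pow_le_of_forall_le {k m : ℕ} (hk : 2 ≤ k) (hm : 1 ≤ m) {S : Finset ℕ}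
    (hS : ∀ a ∈ S, m ≤ a) : ∑ a ∈ S, ((a : ℝ) ^ k)⁻¹ ≤ 2 / (m : ℝ) ^ (k - 1) := by
  obtain ⟨j, rfl⟩ : ∃ j, k = j + 2 := ⟨k - 2, by omega⟩
  have hm0 : (0 : ℝ) < m := by exact_mod_cast hm
  have hsq : ∑ a ∈ S, ((a : ℝ) ^ 2)⁻¹ ≤ 2 / m :=
    calc ∑ a ∈ S, ((a : ℝ) ^ 2)⁻¹ ≤ ∑ a ∈ Ioo (m - 1) (S.sup id + 1), ((a : ℝ) ^ 2)⁻¹ := by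
          refine sum_le_sum_of_subset_of_nonneg (fun a ha => mem_Ioo.2 ⟨?_, ?_⟩)
            fun _ _ _ => by positivity
          · have := hS a ha; omega
          · exact Nat.lt_succ_of_le (le_sup (f := id) ha)
      _ ≤ 2 / ((m - 1 : ℕ) + 1 : ℝ) := sum_Ioo_inv_sq_le _ _
      _ = 2 / m := by rw [Nat.cast_sub hm]; ring_nf
  calc ∑ a ∈ S, ((a : ℝ) ^ (j + 2))⁻¹ ≤ ∑ a ∈ S, ((m : ℝ) ^ j)⁻¹ * ((a : ℝ) ^ 2)⁻¹ := by
        refine sum_le_sum fun a ha => ?_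
        have hma : (m : ℝ) ≤ a := by exact_mod_cast hS a ha
        rw [← mul_inv, pow_add]
        exact inv_anti₀ (by have := hm0.trans_le hma; positivity) (by gcongr)
    _ = ((m : ℝ) ^ j)⁻¹ * ∑ a ∈ S, ((a : ℝ) ^ 2)⁻¹ := (mul_sum _ _ _).symm
    _ ≤ ((m : ℝ) ^ j)⁻¹ * (2 / m) := by gcongr
    _ = 2 / (m : ℝ) ^ (j + 2 - 1) := by
        rw [show j + 2 - 1 = j + 1 by omega, pow_succ]
        field_simp

lemma sum_inv_pow_le_of_forall_real_le {k : ℕ} (hk : 2 ≤ k) {t : ℝ} (ht : 1 ≤ t)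
    {S : Finset ℕ} (hS : ∀ a ∈ S, t ≤ a) : ∑ a ∈ S, ((a : ℝ) ^ k)⁻¹ ≤ 2 / t ^ (k - 1) := by
  have hceil : 1 ≤ ⌈t⌉₊ := Nat.one_le_cast.1 (ht.trans (Nat.le_ceil t))
  refine (sum_inv_pow_le_of_forall_le hk hceil fun a ha => Nat.ceil_le.2 (hS a ha)).trans ?_
  gcongr
  exact Nat.le_ceil t

lemma sum_inv_pow_filter_dvd_le {k g : ℕ} (hk : 2 ≤ k) (hg : 1 ≤ g) {t : ℝ} (ht : 1 ≤ t)
    {D : Finset ℕ} (hD : ∀ d ∈ D, g ∣ d → g * t ≤ d) :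
    ∑ d ∈ D with g ∣ d, ((d : ℝ) ^ k)⁻¹ ≤ 2 / ((g : ℝ) ^ k * t ^ (k - 1)) := by
  have hg0 : (0 : ℝ) < g := by exact_mod_cast hg
  set S := {d ∈ D | g ∣ d}.image (· / g)
  have hsum : ∑ d ∈ D with g ∣ d, ((d : ℝ) ^ k)⁻¹
      = ((g : ℝ) ^ k)⁻¹ * ∑ a ∈ S, ((a : ℝ) ^ k)⁻¹ := by
    rw [sum_image, mul_sum]
    · refine sum_congr rfl fun d hd => ?_
      obtain ⟨c, rfl⟩ := (mem_filter.1 hd).2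
      rw [Nat.mul_div_cancel_left _ hg, Nat.cast_mul, mul_pow, mul_inv]
    · intro d₁ hd₁ d₂ hd₂ h
      exact (Nat.div_left_inj (mem_filter.1 hd₁).2 (mem_filter.1 hd₂).2).1 h
  have hS : ∀ a ∈ S, t ≤ a := by
    simp only [S, mem_image, mem_filter]
    rintro _ ⟨d, ⟨hd, c, rfl⟩, rfl⟩
    have := hD _ hd ⟨c, rfl⟩
    rw [Nat.mul_div_cancel_left _ hg]
    push_cast at this
    exact le_of_mul_le_mul_left this hg0
  rw [hsum, div_mul_eq_div_div_swap, div_eq_inv_mul _ ((g : ℝ) ^ k)]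
  gcongr
  exact sum_inv_pow_le_of_forall_real_le hk ht hS

lemma sum_sum_inv_lcm_pow_le {k N : ℕ} {D : Finset ℕ} (hD : D ⊆ Icc 1 N) :
    ∑ d₁ ∈ D, ∑ d₂ ∈ D, ((Nat.lcm d₁ d₂ : ℝ) ^ k)⁻¹
      ≤ ∑ g ∈ Icc 1 N, (g : ℝ) ^ k * (∑ d ∈ D with g ∣ d, ((d : ℝ) ^ k)⁻¹) ^ 2 := by
  simp_rw [sum_filter, sq, sum_mul_sum, mul_sum]
  rw [sum_comm (s := Icc 1 N)]
  refine sum_le_sum fun d₁ hd₁ => ?_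
  rw [sum_comm (s := Icc 1 N)]
  refine sum_le_sum fun d₂ _ => ?_
  have h₁ := mem_Icc.1 (hD hd₁)
  have hgcd : Nat.gcd d₁ d₂ ∈ Icc 1 N :=
    mem_Icc.2 ⟨Nat.gcd_pos_of_pos_left _ h₁.1, (Nat.gcd_le_left _ h₁.1).trans h₁.2⟩
  refine le_of_eq_of_le ?_ (single_le_sum (fun g _ => by split_ifs <;> positivity) hgcd)
  have hgl : (Nat.gcd d₁ d₂ : ℝ) * Nat.lcm d₁ d₂ = d₁ * d₂ := by
    exact_mod_cast Nat.gcd_mul_lcm d₁ d₂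
  have hg0 : (Nat.gcd d₁ d₂ : ℝ) ^ k ≠ 0 := by
    have := (mem_Icc.1 hgcd).1
    positivity
  simp only [Nat.gcd_dvd_left, Nat.gcd_dvd_right, if_true]
  rw [← mul_inv, ← mul_pow, ← hgl, mul_pow, mul_inv, ← mul_assoc, mul_inv_cancel₀ hg0, one_mul]

lemma pow_mul_sq_sum_inv_pow_filter_dvd_le_of_le {k g : ℕ} (hk : 2 ≤ k) (hg : 1 ≤ g) {y : ℝ}
    (hgy : g ≤ y) {D : Finset ℕ} (hD : ∀ d ∈ D, y ≤ d) :
    (g : ℝ) ^ k * (∑ d ∈ D with g ∣ d, ((d : ℝ) ^ k)⁻¹) ^ 2 ≤ 4 / y ^ k := by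
  obtain ⟨j, rfl⟩ : ∃ j, k = j + 2 := ⟨k - 2, by omega⟩
  have hg0 : (0 : ℝ) < g := by exact_mod_cast hg
  have hy0 : 0 < y := hg0.trans_le hgy
  have hscale : (g : ℝ) ^ (j + 2) * (y / g) ^ (j + 1) = g * y ^ (j + 1) := by
    rw [div_pow, pow_succ' (g : ℝ) (j + 1)]; field_simp
  have hA : ∑ d ∈ D with g ∣ d, ((d : ℝ) ^ (j + 2))⁻¹ ≤ 2 / (g * y ^ (j + 1)) := by
    simpa only [show j + 2 - 1 = j + 1 by omega, hscale] using
      sum_inv_pow_filter_dvd_le hk hg ((one_le_div hg0).2 hgy)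
        fun d hd _ => by rw [mul_div_cancel₀ _ hg0.ne']; exact hD d hd
  calc (g : ℝ) ^ (j + 2) * (∑ d ∈ D with g ∣ d, ((d : ℝ) ^ (j + 2))⁻¹) ^ 2
      ≤ (g : ℝ) ^ (j + 2) * (2 / (g * y ^ (j + 1))) ^ 2 := by gcongr
    _ = 4 * (g : ℝ) ^ j / y ^ (2 * j + 2) := by field_simp; ring
    _ ≤ 4 * y ^ j / y ^ (2 * j + 2) := by gcongr
    _ = 4 / y ^ (j + 2) := by field_simp; ring

lemma pow_mul_sq_sum_inv_pow_filter_dvd_le {k g : ℕ} (hk : 2 ≤ k) (hg : 1 ≤ g)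
    {D : Finset ℕ} (hD : ∀ d ∈ D, 1 ≤ d) :
    (g : ℝ) ^ k * (∑ d ∈ D with g ∣ d, ((d : ℝ) ^ k)⁻¹) ^ 2 ≤ 4 * ((g : ℝ) ^ k)⁻¹ := by
  have hA := sum_inv_pow_filter_dvd_le hk hg le_rfl (D := D)
    fun d hd hgd => by rw [mul_one]; exact_mod_cast Nat.le_of_dvd (hD d hd) hgd
  calc (g : ℝ) ^ k * (∑ d ∈ D with g ∣ d, ((d : ℝ) ^ k)⁻¹) ^ 2
      ≤ (g : ℝ) ^ k * (2 / ((g : ℝ) ^ k * 1 ^ (k - 1))) ^ 2 := by gcongr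
    _ = 4 * ((g : ℝ) ^ k)⁻¹ := by field_simp; ring

lemma sum_pow_mul_sq_sum_inv_pow_le {k N : ℕ} (hk : 2 ≤ k) {y : ℝ} (hy : 1 ≤ y)
    {D : Finset ℕ} (hD : ∀ d ∈ D, 1 ≤ d ∧ y ≤ d) :
    ∑ g ∈ Icc 1 N, (g : ℝ) ^ k * (∑ d ∈ D with g ∣ d, ((d : ℝ) ^ k)⁻¹) ^ 2
      ≤ 12 / y ^ (k - 1) := by
  rw [← sum_filter_add_sum_filter_not _ (fun g : ℕ => (g : ℝ) ≤ y)]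
  have hy0 : 0 < y := by linarith
  have hcard : (#{g ∈ Icc 1 N | ((g : ℕ) : ℝ) ≤ y} : ℝ) ≤ y :=
    calc (#{g ∈ Icc 1 N | ((g : ℕ) : ℝ) ≤ y} : ℝ) ≤ #(Icc 1 ⌊y⌋₊) := by
          gcongr
          intro g hg
          simp only [mem_filter, mem_Icc] at hg ⊢
          exact ⟨hg.1.1, Nat.le_floor hg.2⟩
      _ ≤ y := by simpa using Nat.floor_le hy0.le
  have htail : ∑ g ∈ Icc 1 N with ¬((g : ℕ) : ℝ) ≤ y, ((g : ℝ) ^ k)⁻¹ ≤ 2 / y ^ (k - 1) :=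
    sum_inv_pow_le_of_forall_real_le hk hy fun g hg => (not_le.1 (mem_filter.1 hg).2).le
  have hyk : y * (4 / y ^ k) = 4 / y ^ (k - 1) := by
    rw [← pow_sub_one_mul (by omega : k ≠ 0)]; field_simp
  calc _ ≤ #{g ∈ Icc 1 N | ((g : ℕ) : ℝ) ≤ y} • (4 / y ^ k)
        + ∑ g ∈ Icc 1 N with ¬((g : ℕ) : ℝ) ≤ y, 4 * ((g : ℝ) ^ k)⁻¹ := by
        refine add_le_add (sum_le_card_nsmul _ _ _ fun g hg => ?_) (sum_le_sum fun g hg => ?_) <;>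
          simp only [mem_filter, mem_Icc] at hg
        · exact pow_mul_sq_sum_inv_pow_filter_dvd_le_of_le hk hg.1.1 hg.2 fun d hd => (hD d hd).2
        · exact pow_mul_sq_sum_inv_pow_filter_dvd_le hk hg.1.1 fun d hd => (hD d hd).1
    _ ≤ y * (4 / y ^ k) + 4 * (2 / y ^ (k - 1)) := by
        rw [nsmul_eq_mul, ← mul_sum]
        gcongr
    _ = 12 / y ^ (k - 1) := by rw [hyk]; ring

theorem b_full_interval_L2 (k : ℕ) (hk : 2 ≤ k) :
    ∃ C : ℝ, 0 < C ∧ ∀ y z : ℝ, 1 ≤ y → y < z → ∀ N : ℕ, 1 ≤ N →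
      (∑ n ∈ Finset.Icc 1 N, ((b k y z n : ℝ)) ^ 2)
        ≤ C * (N : ℝ) * y ^ ((1 : ℝ) - (k : ℝ)) := by
  refine ⟨12, by norm_num, fun y z hy _ N _ => ?_⟩
  set D := {d ∈ Icc 1 N | y ≤ ((d : ℕ) : ℝ)}
  have hD : D ⊆ Icc 1 N := filter_subset _ _
  have hDy : ∀ d ∈ D, 1 ≤ d ∧ y ≤ d := fun d hd => by
    simp only [D, mem_filter, mem_Icc] at hd
    exact ⟨hd.1.1, hd.2⟩
  calc ∑ n ∈ Icc 1 N, (b k y z n : ℝ) ^ 2 ≤ ∑ n ∈ Icc 1 N, (#{d ∈ D | d ^ k ∣ n} : ℝ) ^ 2 := by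
        refine sum_le_sum fun n hn => ?_
        rw [← sq_abs]
        gcongr
        exact_mod_cast abs_b_le_card_filter_pow_dvd fun d hd hdn hyd =>
          mem_filter.2 ⟨mem_Icc.2 ⟨hd, hdn.trans (mem_Icc.1 hn).2⟩, hyd⟩
    _ = ∑ d₁ ∈ D, ∑ d₂ ∈ D, (#{n ∈ Icc 1 N | d₁ ^ k ∣ n ∧ d₂ ^ k ∣ n} : ℝ) := by
        exact_mod_cast sum_sq_card_filter (Icc 1 N) D (fun d n => d ^ k ∣ n)
    _ ≤ ∑ d₁ ∈ D, ∑ d₂ ∈ D, N * ((Nat.lcm d₁ d₂ : ℝ) ^ k)⁻¹ := by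
        gcongr with d₁ _ d₂ _
        simpa [Nat.pow_lcm_pow, div_eq_mul_inv] using card_filter_dvd_and_dvd_le N (d₁ ^ k) (d₂ ^ k)
    _ ≤ N * (12 / y ^ (k - 1)) := by
        simp_rw [← mul_sum]
        gcongr
        exact (sum_sum_inv_lcm_pow_le hD).trans (sum_pow_mul_sq_sum_inv_pow_le hk hy hDy)
    _ = 12 * N * y ^ ((1 : ℝ) - k) := by
        rw [div_eq_mul_inv, ← Real.rpow_natCast, ← Real.rpow_neg (by positivity),
          Nat.cast_sub (by omega), Nat.cast_one, neg_sub]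
        ring
end

section
/- Let k ≥ 2 be an integer. There is a constant C = C(k) > 0 such that for all integers N ≥ 2 and all positive integers i, the exponential sum T_i(α) = ∑_{n ≤ N} b_{2^{i-1},2^i}(n) e(αn) satisfies ∫₀¹ |T_i(α)| dα ≤ C · 2^i log N. -/
/-- The exponential sum `T_i(α) = ∑_{n ≤ N} b_{2^{i-1},2^i}(n) e(αn)`. -/
noncomputable def T (k N i : ℕ) (α : ℝ) : ℂ :=
  ∑ n ∈ Finset.Icc 1 N, (b k ((2 : ℝ) ^ (i - 1)) ((2 : ℝ) ^ i) n : ℂ) * e (α * n)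

open Finset Real MeasureTheory
open scoped ArithmeticFunction.Moebius

lemma e_eq_exp_I_mul (x : ℝ) : e x = Complex.exp (Complex.I * (2 * π * x : ℝ)) := by
  rw [e]; push_cast; ring_nf

lemma norm_e (x : ℝ) : ‖e x‖ = 1 := by
  rw [e_eq_exp_I_mul, Complex.norm_exp_I_mul_ofReal]

lemma e_one : e 1 = 1 := by
  simp [e]

lemma e_add (x y : ℝ) : e (x + y) = e x * e y := by
  simp only [e, ← Complex.exp_add]; push_cast; ring_nf

lemma e_mul_natCast (x : ℝ) (m : ℕ) : e (x * m) = e x ^ m := by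
  simp only [e, ← Complex.exp_nat_mul]; push_cast; ring_nf

lemma e_natCast (m : ℕ) : e m = 1 := by
  rw [← one_mul (m : ℝ), e_mul_natCast, e_one, one_pow]

lemma norm_e_sub_one (x : ℝ) : ‖e x - 1‖ = 2 * |sin (π * x)| := by
  rw [e_eq_exp_I_mul, Complex.norm_exp_I_mul_ofReal_sub_one, norm_mul, Real.norm_eq_abs,
    Real.norm_eq_abs, abs_two]
  ring_nf

@[fun_prop]
lemma continuous_e : Continuous e := by
  unfold e; fun_prop

noncomputable def expSum (M : ℕ) (β : ℝ) : ℂ := ∑ m ∈ Icc 1 M, e (β * m)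

@[fun_prop]
lemma continuous_expSum (M : ℕ) : Continuous (expSum M) := by
  unfold expSum; fun_prop

lemma expSum_periodic (M : ℕ) : Function.Periodic (expSum M) 1 := by
  intro β
  refine sum_congr rfl fun m _ => ?_
  rw [add_mul, one_mul, e_add, e_natCast, mul_one]

lemma norm_expSum_le (M : ℕ) (β : ℝ) : ‖expSum M β‖ ≤ M := by
  calc ‖expSum M β‖ ≤ ∑ m ∈ Icc 1 M, ‖e (β * m)‖ := norm_sum_le _ _
    _ = M := by simp [norm_e]

lemma expSum_mul_e_sub_one (M : ℕ) (β : ℝ) : expSum M β * (e β - 1) = e β * (e β ^ M - 1) := by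
  have : expSum M β = e β * ∑ j ∈ range M, e β ^ j := by
    rw [expSum, ← Ico_add_one_right_eq_Icc, sum_Ico_eq_sum_range, mul_sum]
    refine sum_congr (by simp) fun j _ => ?_
    rw [e_mul_natCast, add_comm 1 j, pow_succ']
  rw [this, mul_assoc, geom_sum_mul]

lemma norm_expSum_mul_abs_sin_le (M : ℕ) (β : ℝ) : ‖expSum M β‖ * |sin (π * β)| ≤ 1 := by
  have h := congrArg norm (expSum_mul_e_sub_one M β)
  rw [norm_mul, norm_mul, norm_e, one_mul, norm_e_sub_one] at h
  have : ‖e β ^ M - 1‖ ≤ 2 := (norm_sub_le _ _).trans (by simp [norm_e]; norm_num)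
  linarith

lemma two_mul_min_le_sin_pi_mul {β : ℝ} (h0 : 0 ≤ β) (h1 : β ≤ 1) :
    2 * min β (1 - β) ≤ sin (π * β) := by
  have hsin : sin (π * min β (1 - β)) = sin (π * β) := by
    rcases min_choice β (1 - β) with h | h
    · rw [h]
    · rw [h, mul_one_sub, sin_pi_sub]
  have hle : min β (1 - β) ≤ 1 / 2 := by
    rcases le_total β (1 - β) with h | h
    · rw [min_eq_left h]; linarith
    · rw [min_eq_right h]; linarith
  have := mul_le_sin (x := π * min β (1 - β)) (mul_nonneg pi_pos.le (le_min h0 (sub_nonneg.2 h1)))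
    (by nlinarith [pi_pos])
  rwa [hsin, ← mul_assoc, div_mul_cancel₀ _ pi_ne_zero] at this

lemma norm_expSum_le_of_mem_Ioo (M : ℕ) {β : ℝ} (hβ : β ∈ Set.Ioo 0 1) :
    ‖expSum M β‖ ≤ (2 * β)⁻¹ + (2 * (1 - β))⁻¹ := by
  obtain ⟨h0, h1⟩ := hβ
  have hmin : 0 < min β (1 - β) := lt_min h0 (by linarith)
  have hsin : 2 * min β (1 - β) ≤ |sin (π * β)| :=
    (two_mul_min_le_sin_pi_mul h0.le h1.le).trans (le_abs_self _)
  calc ‖expSum M β‖ ≤ (2 * min β (1 - β))⁻¹ := by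
        rw [← one_div, le_div_iff₀ (by positivity)]
        exact (mul_le_mul_of_nonneg_left hsin (norm_nonneg _)).trans
          (norm_expSum_mul_abs_sin_le M β)
    _ ≤ (2 * β)⁻¹ + (2 * (1 - β))⁻¹ := by
        have : 0 < 1 - β := by linarith
        rcases min_choice β (1 - β) with h | h <;> rw [h] <;> simp only [le_add_iff_nonneg_left,
          le_add_iff_nonneg_right] <;> positivity

lemma intervalIntegrable_norm_expSum (M : ℕ) (a b : ℝ) :
    IntervalIntegrable (fun β => ‖expSum M β‖) volume a b :=
  (continuous_expSum M).norm.intervalIntegrable a b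

lemma integral_norm_expSum_le_mul (M : ℕ) {a b : ℝ} (hab : a ≤ b) :
    ∫ β in a..b, ‖expSum M β‖ ≤ (b - a) * M := by
  calc ∫ β in a..b, ‖expSum M β‖ ≤ ∫ _ in a..b, (M : ℝ) :=
        intervalIntegral.integral_mono_on hab (intervalIntegrable_norm_expSum M a b)
          intervalIntegrable_const fun β _ => norm_expSum_le M β
    _ = (b - a) * M := by rw [intervalIntegral.integral_const, smul_eq_mul]

lemma intervalIntegrable_inv_two_mul {a b : ℝ} (ha : 0 < a) (hab : a ≤ b) :
    IntervalIntegrable (fun β : ℝ => (2 * β)⁻¹) volume a b := by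
  refine intervalIntegral.intervalIntegrable_inv (fun β hβ => ?_) (by fun_prop)
  rw [Set.uIcc_of_le hab] at hβ
  exact mul_ne_zero two_ne_zero (ha.trans_le hβ.1).ne'

lemma intervalIntegrable_inv_two_mul_one_sub {a : ℝ} (ha : 0 < a) (haa : a ≤ 1 - a) :
    IntervalIntegrable (fun β : ℝ => (2 * (1 - β))⁻¹) volume a (1 - a) := by
  simpa using ((intervalIntegrable_inv_two_mul ha haa).comp_sub_left 1).symm

lemma integral_inv_two_mul_add_inv_two_mul_one_sub {a : ℝ} (ha : 0 < a) (haa : a ≤ 1 - a) :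
    ∫ β in a..1 - a, ((2 * β)⁻¹ + (2 * (1 - β))⁻¹) = log ((1 - a) / a) := by
  have hleft : ∫ β in a..1 - a, (2 * β)⁻¹ = 2⁻¹ * log ((1 - a) / a) := by
    have h0 : (0 : ℝ) ∉ Set.uIcc a (1 - a) := by
      rw [Set.uIcc_of_le haa]; exact fun h => ha.not_ge h.1
    simp_rw [mul_inv]
    rw [intervalIntegral.integral_const_mul, integral_inv h0]
  have hright : ∫ β in a..1 - a, (2 * (1 - β))⁻¹ = 2⁻¹ * log ((1 - a) / a) := by
    rw [intervalIntegral.integral_comp_sub_left (fun β => (2 * β)⁻¹), sub_sub_cancel, hleft]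
  rw [intervalIntegral.integral_add (intervalIntegrable_inv_two_mul ha haa)
    (intervalIntegrable_inv_two_mul_one_sub ha haa), hleft, hright]
  ring

lemma integral_norm_expSum_le_log (M : ℕ) {a : ℝ} (ha : 0 < a) (haa : a ≤ 1 - a) :
    ∫ β in a..1 - a, ‖expSum M β‖ ≤ log ((1 - a) / a) := by
  rw [← integral_inv_two_mul_add_inv_two_mul_one_sub ha haa]
  refine intervalIntegral.integral_mono_on haa (intervalIntegrable_norm_expSum M _ _) ?_ fun β hβ =>
    norm_expSum_le_of_mem_Ioo M ⟨by linarith [hβ.1], by linarith [hβ.2]⟩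
  exact (intervalIntegrable_inv_two_mul ha haa).add (intervalIntegrable_inv_two_mul_one_sub ha haa)

theorem integral_norm_expSum_le (M : ℕ) : ∫ β in (0 : ℝ)..1, ‖expSum M β‖ ≤ 2 + log M := by
  have hlog := log_natCast_nonneg M
  rcases le_or_gt M 1 with hM | hM
  · have : (M : ℝ) ≤ 1 := by exact_mod_cast hM
    have := integral_norm_expSum_le_mul M zero_le_one
    linarith
  set a : ℝ := (M : ℝ)⁻¹
  have hM' : (2 : ℝ) ≤ M := by exact_mod_cast hM
  have ha : 0 < a := by positivity
  have haM : a * M = 1 := inv_mul_cancel₀ (by positivity)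
  have haa : a ≤ 1 - a := by nlinarith
  have hmiddle : log ((1 - a) / a) ≤ log M := by
    apply log_le_log (div_pos (by linarith) ha)
    rw [div_le_iff₀ ha]; nlinarith
  have hint := intervalIntegrable_norm_expSum M
  rw [← intervalIntegral.integral_add_adjacent_intervals (hint 0 a) (hint a 1),
    ← intervalIntegral.integral_add_adjacent_intervals (hint a (1 - a)) (hint (1 - a) 1)]
  have h1 := integral_norm_expSum_le_mul M ha.le
  have h2 := integral_norm_expSum_le_log M ha haa
  have h3 := integral_norm_expSum_le_mul M (b := 1) (a := 1 - a) (by linarith)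
  linarith

theorem Function.Periodic.intervalIntegral_comp_natCast_mul {E : Type*} [NormedAddCommGroup E]
    [NormedSpace ℝ E] {f : ℝ → E} (hf : Function.Periodic f 1)
    (hfi : IntervalIntegrable f volume 0 1) {q : ℕ} (hq : q ≠ 0) :
    ∫ x in (0 : ℝ)..1, f (q * x) = ∫ x in (0 : ℝ)..1, f x := by
  have := hf.intervalIntegral_add_zsmul_eq q 0 (hf.intervalIntegrable₀ one_ne_zero hfi)
  simp only [zero_add, Int.cast_natCast, zsmul_eq_mul, mul_one, natCast_zsmul] at this
  rw [intervalIntegral.integral_comp_mul_left f (Nat.cast_ne_zero.2 hq), mul_zero, mul_one, this,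
    ← Nat.cast_smul_eq_nsmul ℝ, inv_smul_smul₀ (Nat.cast_ne_zero.2 hq)]

lemma b_natCast_eq_sum_Ico {k : ℕ} (hk : k ≠ 0) (y z : ℕ) {n : ℕ} (hn : n ≠ 0) :
    b k y z n = ∑ d ∈ Ico y z, if d ^ k ∣ n then μ d else 0 := by
  rw [b, ← sum_filter]
  refine sum_congr (ext fun d => ?_) fun _ _ => rfl
  simp only [mem_filter, mem_Icc, mem_Ico, Nat.cast_le, Nat.cast_lt]
  constructor
  · rintro ⟨-, hyd, hdz, hdvd⟩
    exact ⟨⟨hyd, hdz⟩, hdvd⟩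
  · rintro ⟨⟨hyd, hdz⟩, hdvd⟩
    have hdk : d ^ k ≠ 0 := fun h => hn (Nat.eq_zero_of_zero_dvd (h ▸ hdvd))
    have hd : d ≠ 0 := fun h => hdk (by simp [h, hk])
    exact ⟨⟨Nat.one_le_iff_ne_zero.2 hd, (Nat.le_self_pow hk d).trans (Nat.le_of_dvd
      (Nat.pos_of_ne_zero hn) hdvd)⟩, hyd, hdz, hdvd⟩

lemma sum_Icc_filter_dvd {M : Type*} [AddCommMonoid M] (q N : ℕ) (f : ℕ → M) :
    ∑ n ∈ Icc 1 N with q ∣ n, f n = ∑ m ∈ Icc 1 (N / q), f (q * m) := by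
  rcases Nat.eq_zero_or_pos q with rfl | hq
  · rw [Nat.div_zero, Icc_eq_empty_of_lt zero_lt_one, sum_empty]
    exact sum_eq_zero fun n hn => by simp only [mem_filter, mem_Icc, zero_dvd_iff] at hn; omega
  rw [← sum_image fun m _ m' _ h => Nat.eq_of_mul_eq_mul_left hq h]
  refine sum_congr (ext fun n => ?_) fun _ _ => rfl
  simp only [mem_filter, mem_Icc, mem_image, Nat.le_div_iff_mul_le hq]
  constructor
  · rintro ⟨⟨hn, hnN⟩, m, rfl⟩
    exact ⟨m, ⟨Nat.pos_of_mul_pos_left hn, by linarith⟩, rfl⟩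
  · rintro ⟨m, ⟨hm, hmN⟩, rfl⟩
    exact ⟨⟨Nat.mul_pos hq hm, by linarith⟩, m, rfl⟩

lemma sum_b_mul_e_eq {k : ℕ} (hk : k ≠ 0) (y z N : ℕ) (α : ℝ) :
    ∑ n ∈ Icc 1 N, (b k y z n : ℂ) * e (α * n)
      = ∑ d ∈ Ico y z, (μ d : ℂ) * expSum (N / d ^ k) ((d ^ k : ℕ) * α) := by
  calc ∑ n ∈ Icc 1 N, (b k y z n : ℂ) * e (α * n)
      = ∑ n ∈ Icc 1 N, ∑ d ∈ Ico y z, if d ^ k ∣ n then (μ d : ℂ) * e (α * n) else 0 := by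
        refine sum_congr rfl fun n hn => ?_
        rw [b_natCast_eq_sum_Ico hk y z (by simp at hn; omega), Int.cast_sum, sum_mul]
        refine sum_congr rfl fun d _ => ?_
        split_ifs <;> simp
    _ = ∑ d ∈ Ico y z, ∑ n ∈ Icc 1 N with d ^ k ∣ n, (μ d : ℂ) * e (α * n) := by
        rw [sum_comm]; simp only [sum_filter]
    _ = ∑ d ∈ Ico y z, (μ d : ℂ) * expSum (N / d ^ k) ((d ^ k : ℕ) * α) := by
        refine sum_congr rfl fun d _ => ?_
        rw [sum_Icc_filter_dvd, expSum, mul_sum]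
        refine sum_congr rfl fun m _ => ?_
        push_cast; ring_nf

lemma T_eq_sum_expSum {k : ℕ} (hk : k ≠ 0) (N i : ℕ) (α : ℝ) :
    T k N i α = ∑ d ∈ Ico (2 ^ (i - 1)) (2 ^ i),
      (μ d : ℂ) * expSum (N / d ^ k) ((d ^ k : ℕ) * α) := by
  rw [T, ← sum_b_mul_e_eq hk]
  push_cast
  rfl

lemma norm_T_le {k : ℕ} (hk : k ≠ 0) (N i : ℕ) (α : ℝ) :
    ‖T k N i α‖ ≤ ∑ d ∈ Ico (2 ^ (i - 1)) (2 ^ i), ‖expSum (N / d ^ k) ((d ^ k : ℕ) * α)‖ := by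
  rw [T_eq_sum_expSum hk]
  refine (norm_sum_le _ _).trans (sum_le_sum fun d _ => ?_)
  rw [norm_mul, Complex.norm_intCast]
  exact mul_le_of_le_one_left (norm_nonneg _) (mod_cast ArithmeticFunction.abs_moebius_le_one)

lemma integral_norm_expSum_comp_mul_le (M : ℕ) {q : ℕ} (hq : q ≠ 0) :
    ∫ α in (0 : ℝ)..1, ‖expSum M (q * α)‖ ≤ 2 + log M :=
  (((expSum_periodic M).comp norm).intervalIntegral_comp_natCast_mul
    (intervalIntegrable_norm_expSum M 0 1) hq).trans_le (integral_norm_expSum_le M)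

lemma integral_norm_T_le {k : ℕ} (hk : k ≠ 0) (N i : ℕ) :
    ∫ α in (0 : ℝ)..1, ‖T k N i α‖ ≤ 2 ^ i * (2 + log N) := by
  set s := Ico (2 ^ (i - 1)) (2 ^ i)
  have hterm : ∀ d ∈ s, ∫ α in (0 : ℝ)..1, ‖expSum (N / d ^ k) ((d ^ k : ℕ) * α)‖
      ≤ 2 + log N := fun d hd => by
    have hd : d ≠ 0 := Nat.one_le_iff_ne_zero.1 (Nat.one_le_two_pow.trans (mem_Ico.1 hd).1)
    refine (integral_norm_expSum_comp_mul_le _ (pow_ne_zero k hd)).trans ?_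
    rcases (N / d ^ k).eq_zero_or_pos with h | h
    · rw [h, Nat.cast_zero, log_zero]; linarith [log_natCast_nonneg N]
    · gcongr
      exact Nat.div_le_self _ _
  have hcont : ∀ d, Continuous fun α : ℝ => ‖expSum (N / d ^ k) ((d ^ k : ℕ) * α)‖ := by
    intro d; fun_prop
  calc ∫ α in (0 : ℝ)..1, ‖T k N i α‖
      ≤ ∫ α in (0 : ℝ)..1, ∑ d ∈ s, ‖expSum (N / d ^ k) ((d ^ k : ℕ) * α)‖ :=
        intervalIntegral.integral_mono_on zero_le_one
          ((by unfold T; fun_prop : Continuous fun α => ‖T k N i α‖).intervalIntegrable 0 1)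
          ((continuous_finsetSum s fun d _ => hcont d).intervalIntegrable 0 1)
          fun α _ => norm_T_le hk N i α
    _ = ∑ d ∈ s, ∫ α in (0 : ℝ)..1, ‖expSum (N / d ^ k) ((d ^ k : ℕ) * α)‖ :=
        intervalIntegral.integral_finsetSum fun d _ => (hcont d).intervalIntegrable 0 1
    _ ≤ #s * (2 + log N) := by
        rw [← nsmul_eq_mul, ← sum_const]; exact sum_le_sum hterm
    _ ≤ 2 ^ i * (2 + log N) := by
        have := log_natCast_nonneg N
        gcongr
        rw [Nat.card_Ico]; exact_mod_cast Nat.sub_le _ _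

theorem Ti_L1_bound (k : ℕ) (hk : 2 ≤ k) :
    ∃ C : ℝ, 0 < C ∧ ∀ N : ℕ, 2 ≤ N → ∀ i : ℕ, 1 ≤ i →
      (∫ α in (0:ℝ)..1, ‖T k N i α‖) ≤ C * (2 : ℝ) ^ i * Real.log N := by
  refine ⟨5, by norm_num, fun N hN i _ => ?_⟩
  have hlog : 1 / 2 < log N := by
    have : log 2 ≤ log N := log_le_log two_pos (mod_cast hN)
    linarith [log_two_gt_d9]
  calc ∫ α in (0 : ℝ)..1, ‖T k N i α‖ ≤ 2 ^ i * (2 + log N) := integral_norm_T_le (by omega) N i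
    _ ≤ 5 * 2 ^ i * log N := by nlinarith [pow_pos (two_pos (α := ℝ)) i]
end
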